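/- Consider N = 3 customers with sequential distances, so d(i,j) = ∞ for j > i, and let f be a decay function with f(∞) = 0 and α > 0. Then the probability under the ddCRP that customers 1 and 3 lie in the same block of the induced table partition z(c) equals f(d(3,1))/(f(d(3,1)) + f(d(3,2)) + α) + [f(d(3,2))/(f(d(3,1)) + f(d(3,2)) + α)] · [f(d(2,1))/(f(d(2,1)) + α)]. Moreover, in the two-customer system consisting of customers 1 and 3 alone (with the restricted distance), the probability that they share a block equals f(d(3,1))/(f(d(3,1)) + α). -/

import Mathlib

open scoped BigOperators ENNReal Classical

noncomputable section

/-- Weight that customer `i` assigns to linking to customer `j`: `α` for a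
self-link (`j = i`) and `f (d i j)` otherwise. -/
def ddcrpWeight {N : ℕ} (d : Fin N → Fin N → ℝ≥0∞) (f : ℝ≥0∞ → ℝ) (α : ℝ)
    (i j : Fin N) : ℝ :=
  if j = i then α else f (d i j)

/-- ddCRP probability of the assignment `c` for the sub-system consisting of the
customers in `S` (with the restricted distances). -/
def ddcrpProbOn {N : ℕ} (S : Finset (Fin N)) (d : Fin N → Fin N → ℝ≥0∞)
    (f : ℝ≥0∞ → ℝ) (α : ℝ) (c : Fin N → Fin N) : ℝ :=
  ∏ i ∈ S, ddcrpWeight d f α i (c i) / (α + ∑ j ∈ S.erase i, f (d i j))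

/-- ddCRP probability of the assignment `c` (all `N` customers). -/
def ddcrpProb {N : ℕ} (d : Fin N → Fin N → ℝ≥0∞) (f : ℝ≥0∞ → ℝ) (α : ℝ)
    (c : Fin N → Fin N) : ℝ :=
  ddcrpProbOn Finset.univ d f α c

/-- `sameTable c i j`: the finest equivalence relation relating each customer `a`
to `c a` holds between `i` and `j`. -/
def sameTable {N : ℕ} (c : Fin N → Fin N) : Fin N → Fin N → Prop :=
  Relation.EqvGen fun a b => b = c a

/-- The induced table partition `z(c)`: the set of equivalence classes of the
finest equivalence relation relating each `i` to `c i`. -/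
def tablePartition {N : ℕ} (c : Fin N → Fin N) : Set (Set (Fin N)) :=
  {B | ∃ i : Fin N, B = {j | sameTable c i j}}

lemma sameTable_invariant {N : ℕ} (c : Fin N → Fin N) (g : Fin N → Bool)
    (hg : ∀ a, g (c a) = g a) {i j : Fin N} (h : sameTable c i j) : g i = g j := by
  induction h with
  | rel a b hb => subst hb; exact (hg a).symm
  | refl => rfl
  | symm _ _ _ ih => exact ih.symm
  | trans _ _ _ _ _ ih1 ih2 => exact ih1.trans ih2

def e3 : (Fin 3 × Fin 3 × Fin 3) ≃ (Fin 3 → Fin 3) where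
  toFun p := ![p.1, p.2.1, p.2.2]
  invFun c := (c 0, c 1, c 2)
  left_inv p := rfl
  right_inv c := by funext i; fin_cases i <;> rfl

lemma sum3 (F : (Fin 3 → Fin 3) → ℝ) :
    ∑ c, F c = ∑ x : Fin 3, ∑ y : Fin 3, ∑ z : Fin 3, F ![x, y, z] := by
  rw [← Equiv.sum_comp e3 F, Fintype.sum_prod_type]
  simp [Fintype.sum_prod_type, e3]
  rfl

/-- with `N = 3` customers and sequential distances, the ddCRP
probability that customers `1` and `3` (indices `0` and `2`) share a block of the
induced table partition is
`f(d₃₁)/(f(d₃₁)+f(d₃₂)+α) + (f(d₃₂)/(f(d₃₁)+f(d₃₂)+α)) · (f(d₂₁)/(f(d₂₁)+α))`,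
while in the two-customer system of customers `1` and `3` alone it is
`f(d₃₁)/(f(d₃₁)+α)`. -/
theorem stmt8 (d : Fin 3 → Fin 3 → ℝ≥0∞)
    (hseq : ∀ i j : Fin 3, i < j → d i j = ⊤)
    (f : ℝ≥0∞ → ℝ) (hf_anti : Antitone f) (hf_nonneg : ∀ x, 0 ≤ f x)
    (hf_top : f ⊤ = 0) (α : ℝ) (hα : 0 < α) :
    (∑ c : Fin 3 → Fin 3,
        Set.indicator {c | sameTable c 0 2} (ddcrpProb d f α) c)
      = f (d 2 0) / (f (d 2 0) + f (d 2 1) + α)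
        + f (d 2 1) / (f (d 2 0) + f (d 2 1) + α) * (f (d 1 0) / (f (d 1 0) + α)) ∧
    (∑ c : Fin 3 → Fin 3,
        Set.indicator
          {c | c 1 = 1 ∧ c 0 ≠ 1 ∧ c 2 ≠ 1 ∧ sameTable c 0 2}
          (ddcrpProbOn ({0, 2} : Finset (Fin 3)) d f α) c)
      = f (d 2 0) / (f (d 2 0) + α) := by
  have h01 : f (d 0 1) = 0 := by rw [hseq 0 1 (by decide)]; exact hf_top
  have h02 : f (d 0 2) = 0 := by rw [hseq 0 2 (by decide)]; exact hf_top
  have h12 : f (d 1 2) = 0 := by rw [hseq 1 2 (by decide)]; exact hf_top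
  have hα0 : α ≠ 0 := ne_of_gt hα
  have hn10 := hf_nonneg (d 1 0)
  have hn20 := hf_nonneg (d 2 0)
  have hn21 := hf_nonneg (d 2 1)
  have hden1 : α + f (d 1 0) ≠ 0 := by linarith
  have hden2 : α + (f (d 2 0) + f (d 2 1)) ≠ 0 := by linarith
  have hden1' : f (d 1 0) + α ≠ 0 := by linarith
  have hden2' : f (d 2 0) + f (d 2 1) + α ≠ 0 := by linarith
  have hden3 : α + f (d 2 0) ≠ 0 := by linarith
  have hden3' : f (d 2 0) + α ≠ 0 := by linarith
  have hform : ∀ c : Fin 3 → Fin 3, ddcrpProb d f α c =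
      ddcrpWeight d f α 0 (c 0) / α *
        (ddcrpWeight d f α 1 (c 1) / (α + f (d 1 0)) *
          (ddcrpWeight d f α 2 (c 2) / (α + (f (d 2 0) + f (d 2 1))))) := by
    intro c
    have e0 : (Finset.univ.erase (0 : Fin 3)) = {1, 2} := by decide
    have e1 : (Finset.univ.erase (1 : Fin 3)) = {0, 2} := by decide
    have e2 : (Finset.univ.erase (2 : Fin 3)) = {0, 1} := by decide
    simp [ddcrpProb, ddcrpProbOn, Fin.prod_univ_three, e0, e1, e2,
      h01, h02, h12, Fin.sum_univ_three, div_mul_div_comm, mul_assoc]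
  -- not-same-table facts
  have hns011 : ¬ sameTable ![0, 1, 1] 0 2 := fun h =>
    absurd (sameTable_invariant _ (fun i => decide (i = 0)) (by decide) h) (by decide)
  have hns002 : ¬ sameTable ![0, 0, 2] 0 2 := fun h =>
    absurd (sameTable_invariant _ (fun i => decide (i = 2)) (by decide) h) (by decide)
  have hns012 : ¬ sameTable ![0, 1, 2] 0 2 := fun h =>
    absurd (sameTable_invariant _ (fun i => decide (i = 2)) (by decide) h) (by decide)
  have hst000 : (![0, 0, 0] : Fin 3 → Fin 3) ∈ {c : Fin 3 → Fin 3 | sameTable c 0 2} :=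
    Relation.EqvGen.symm _ _ (Relation.EqvGen.rel 2 0 rfl)
  have hst010 : (![0, 1, 0] : Fin 3 → Fin 3) ∈ {c : Fin 3 → Fin 3 | sameTable c 0 2} :=
    Relation.EqvGen.symm _ _ (Relation.EqvGen.rel 2 0 rfl)
  have hst001 : (![0, 0, 1] : Fin 3 → Fin 3) ∈ {c : Fin 3 → Fin 3 | sameTable c 0 2} :=
    Relation.EqvGen.symm _ _ (Relation.EqvGen.trans _ _ _
      (Relation.EqvGen.rel 2 1 rfl) (Relation.EqvGen.rel 1 0 rfl))
  constructor
  · -- Part 1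
    have hz1 : ∀ y z : Fin 3,
        Set.indicator {c | sameTable c 0 2} (ddcrpProb d f α) ![1, y, z] = 0 := by
      intro y z
      refine Set.indicator_apply_eq_zero.2 fun _ => ?_
      rw [hform]; simp [ddcrpWeight, h01]
    have hz2 : ∀ y z : Fin 3,
        Set.indicator {c | sameTable c 0 2} (ddcrpProb d f α) ![2, y, z] = 0 := by
      intro y z
      refine Set.indicator_apply_eq_zero.2 fun _ => ?_
      rw [hform]; simp [ddcrpWeight, h02]
    have hz3 : ∀ z : Fin 3,
        Set.indicator {c | sameTable c 0 2} (ddcrpProb d f α) ![0, 2, z] = 0 := by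
      intro z
      refine Set.indicator_apply_eq_zero.2 fun _ => ?_
      rw [hform]; simp [ddcrpWeight, h12]
    have hm000 : Set.indicator {c | sameTable c 0 2} (ddcrpProb d f α) ![0, 0, 0]
        = α / α * (f (d 1 0) / (α + f (d 1 0)) * (f (d 2 0) / (α + (f (d 2 0) + f (d 2 1))))) := by
      rw [Set.indicator_of_mem hst000, hform]
      simp [ddcrpWeight]
    have hm010 : Set.indicator {c | sameTable c 0 2} (ddcrpProb d f α) ![0, 1, 0]
        = α / α * (α / (α + f (d 1 0)) * (f (d 2 0) / (α + (f (d 2 0) + f (d 2 1))))) := by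
      rw [Set.indicator_of_mem hst010, hform]
      simp [ddcrpWeight]
    have hm001 : Set.indicator {c | sameTable c 0 2} (ddcrpProb d f α) ![0, 0, 1]
        = α / α * (f (d 1 0) / (α + f (d 1 0)) * (f (d 2 1) / (α + (f (d 2 0) + f (d 2 1))))) := by
      rw [Set.indicator_of_mem hst001, hform]
      simp [ddcrpWeight]
    have hn011 : Set.indicator {c | sameTable c 0 2} (ddcrpProb d f α) ![0, 1, 1] = 0 :=
      Set.indicator_of_notMem (show (![0, 1, 1] : Fin 3 → Fin 3) ∉ {c : Fin 3 → Fin 3 | sameTable c 0 2} from hns011) _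
    have hn002 : Set.indicator {c | sameTable c 0 2} (ddcrpProb d f α) ![0, 0, 2] = 0 :=
      Set.indicator_of_notMem (show (![0, 0, 2] : Fin 3 → Fin 3) ∉ {c : Fin 3 → Fin 3 | sameTable c 0 2} from hns002) _
    have hn012 : Set.indicator {c | sameTable c 0 2} (ddcrpProb d f α) ![0, 1, 2] = 0 :=
      Set.indicator_of_notMem (show (![0, 1, 2] : Fin 3 → Fin 3) ∉ {c : Fin 3 → Fin 3 | sameTable c 0 2} from hns012) _
    rw [sum3]
    simp only [Fin.sum_univ_three, hz1, hz2, hz3, hm000, hm010, hm001,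
      hn011, hn002, hn012, add_zero, zero_add]
    field_simp
    ring
  · -- Part 2
    have hformQ : ∀ c : Fin 3 → Fin 3,
        ddcrpProbOn ({0, 2} : Finset (Fin 3)) d f α c =
          ddcrpWeight d f α 0 (c 0) / α *
            (ddcrpWeight d f α 2 (c 2) / (α + f (d 2 0))) := by
      intro c
      have e0 : (({0, 2} : Finset (Fin 3)).erase 0) = {2} := by decide
      have e2 : (({0, 2} : Finset (Fin 3)).erase 2) = {0} := by decide
      have h02' : ((0 : Fin 3) ∉ ({2} : Finset (Fin 3))) := by decide
      rw [ddcrpProbOn, Finset.prod_insert h02', Finset.prod_singleton, e0, e2]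
      simp [h02]
    have hz1 : ∀ x z : Fin 3,
        Set.indicator {c | c 1 = 1 ∧ c 0 ≠ 1 ∧ c 2 ≠ 1 ∧ sameTable c 0 2}
          (ddcrpProbOn ({0, 2} : Finset (Fin 3)) d f α) ![x, 0, z] = 0 := by
      intro x z
      refine Set.indicator_of_notMem (fun h => ?_) _
      exact absurd h.1 (by simp)
    have hz2 : ∀ x z : Fin 3,
        Set.indicator {c | c 1 = 1 ∧ c 0 ≠ 1 ∧ c 2 ≠ 1 ∧ sameTable c 0 2}
          (ddcrpProbOn ({0, 2} : Finset (Fin 3)) d f α) ![x, 2, z] = 0 := by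
      intro x z
      refine Set.indicator_of_notMem (fun h => ?_) _
      exact absurd h.1 (by simp)
    have hz3 : ∀ z : Fin 3,
        Set.indicator {c | c 1 = 1 ∧ c 0 ≠ 1 ∧ c 2 ≠ 1 ∧ sameTable c 0 2}
          (ddcrpProbOn ({0, 2} : Finset (Fin 3)) d f α) ![1, 1, z] = 0 := by
      intro z
      refine Set.indicator_of_notMem (fun h => ?_) _
      exact absurd h.2.1 (by simp)
    have hz4 : ∀ y z : Fin 3,
        Set.indicator {c | c 1 = 1 ∧ c 0 ≠ 1 ∧ c 2 ≠ 1 ∧ sameTable c 0 2}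
          (ddcrpProbOn ({0, 2} : Finset (Fin 3)) d f α) ![2, y, z] = 0 := by
      intro y z
      refine Set.indicator_apply_eq_zero.2 fun _ => ?_
      rw [hformQ]; simp [ddcrpWeight, h02]
    have hz5 : Set.indicator {c | c 1 = 1 ∧ c 0 ≠ 1 ∧ c 2 ≠ 1 ∧ sameTable c 0 2}
          (ddcrpProbOn ({0, 2} : Finset (Fin 3)) d f α) ![0, 1, 1] = 0 := by
      refine Set.indicator_of_notMem (fun h => ?_) _
      exact absurd h.2.2.1 (by simp)
    have hz6 : Set.indicator {c | c 1 = 1 ∧ c 0 ≠ 1 ∧ c 2 ≠ 1 ∧ sameTable c 0 2}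
          (ddcrpProbOn ({0, 2} : Finset (Fin 3)) d f α) ![0, 1, 2] = 0 := by
      refine Set.indicator_of_notMem (fun h => ?_) _
      exact hns012 h.2.2.2
    have hm : Set.indicator {c | c 1 = 1 ∧ c 0 ≠ 1 ∧ c 2 ≠ 1 ∧ sameTable c 0 2}
          (ddcrpProbOn ({0, 2} : Finset (Fin 3)) d f α) ![0, 1, 0]
        = α / α * (f (d 2 0) / (α + f (d 2 0))) := by
      have hmem : (![0, 1, 0] : Fin 3 → Fin 3) ∈
          {c : Fin 3 → Fin 3 | c 1 = 1 ∧ c 0 ≠ 1 ∧ c 2 ≠ 1 ∧ sameTable c 0 2} :=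
        ⟨rfl, by decide, by decide, hst010⟩
      rw [Set.indicator_of_mem hmem, hformQ]
      simp [ddcrpWeight]
    rw [sum3]
    simp only [Fin.sum_univ_three, hz1, hz2, hz3, hz4, hz5, hz6, hm, add_zero, zero_add]
    rw [div_self hα0, one_mul, add_comm α]
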